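/- arXiv:2412.06316 — 2 statements merged into one kernel-verified Lean document; each statement's English description precedes it below -/
import Mathlib

section
/- Let G be a graph of tree-width k ≥ 3 and let v be a vertex of degree at most 2 in G. Then the graph G' obtained from G by contracting v to one of its neighbours also has tree-width k. -/
/-!
Contracting `v` into a neighbour `a` is a minor operation: replacing `v` by `a` in every bag of a
tree decomposition of `G` gives one of `G'`, because some bag contains the edge `va`, so the bags
containing `v` or `a` still form a subtree. (If `v` is isolated, `G'` is just `G - v`.)
Conversely, the at most two neighbours of `v` are adjacent in `G'`, so one bag of a decomposition
of `G'` contains all of them; hanging a new leaf bag `{v} ∪ N(v)`, of size at most 3, onto that bag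
gives a decomposition of `G` without increasing the width, as long as the width is at least 2.
So `G` and `G'` have tree-width at most `m` for the same `m ≥ 2`, and `k ≥ 3` puts both `k` and
`k - 1` in that range.
-/

open SimpleGraph

/-- A tree decomposition of a graph `G`. -/
structure TreeDecomp {V : Type} (G : SimpleGraph V) where
  ι : Type
  t : SimpleGraph ι
  t_tree : t.IsTree
  bag : ι → Set V
  bag_cover : ∀ v : V, ∃ i, v ∈ bag i
  bag_edge : ∀ ⦃u v : V⦄, G.Adj u v → ∃ i, u ∈ bag i ∧ v ∈ bag i
  bag_conn : ∀ v : V, (t.induce {i | v ∈ bag i}).Connected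

/-- `G` has tree-width at most `k`: there is a tree decomposition all of whose
bags have at most `k + 1` vertices. -/
def TreewidthLE {V : Type} (G : SimpleGraph V) (k : ℕ) : Prop :=
  ∃ D : TreeDecomp G, ∀ i, (D.bag i).ncard ≤ k + 1

/-- The tree-width of `G`. -/
noncomputable def treewidth {V : Type} (G : SimpleGraph V) : ℕ :=
  sInf {k | TreewidthLE G k}

/-- The graph obtained from `G` by contracting the vertex `v` (of degree at most 2)
to one of its neighbours: `v` is deleted and its (at most two) neighbours become
adjacent. -/
def contractVertex {V : Type} (G : SimpleGraph V) (v : V) :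
    SimpleGraph {u : V // u ≠ v} where
  Adj a b := a ≠ b ∧ (G.Adj a b ∨ (G.Adj a v ∧ G.Adj b v))
  symm := by
    constructor
    rintro a b ⟨hab, h | ⟨h1, h2⟩⟩
    · exact ⟨hab.symm, Or.inl h.symm⟩
    · exact ⟨hab.symm, Or.inr ⟨h2, h1⟩⟩
  loopless := by constructor; rintro a ⟨h, -⟩; exact h rfl

namespace SimpleGraph

variable {V W ι : Type*} {G : SimpleGraph V}

theorem IsAcyclic.map (f : V ↪ W) (h : G.IsAcyclic) : (G.map f).IsAcyclic := by
  intro w c hc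
  have hrange : ∀ x ∈ c.support, x ∈ Set.range f := fun x hx => by
    have hx' := mem_support_of_mem_walk_support c hc.not_nil hx
    rw [support_map] at hx'
    exact Set.image_subset_range _ _ hx'
  have hacyc := (Iso.isAcyclic_iff (Embedding.map f G).isoInduceRange).mp h
  refine hacyc (c.induce _ hrange) (Walk.IsCycle.of_map (f := (Embedding.induce _).toHom) ?_)
  rwa [Walk.map_induce]

def addLeaf (t : SimpleGraph ι) (i₀ : ι) : SimpleGraph (Option ι) :=
  t.map Function.Embedding.some ⊔ edge none (some i₀)

variable {t : SimpleGraph ι} {i₀ : ι}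

lemma addLeaf_adj_some_some {i j : ι} : (t.addLeaf i₀).Adj (some i) (some j) ↔ t.Adj i j := by
  have := map_adj_apply (G := t) (f := Function.Embedding.some) (a := i) (b := j)
  simp_all [addLeaf, edge_adj]

lemma addLeaf_adj_none_some : (t.addLeaf i₀).Adj none (some i₀) := by
  simp [addLeaf, edge_adj]

def addLeafHom (t : SimpleGraph ι) (i₀ : ι) : t →g t.addLeaf i₀ :=
  ⟨some, addLeaf_adj_some_some.mpr⟩

theorem IsTree.addLeaf (h : t.IsTree) (i₀ : ι) : (t.addLeaf i₀).IsTree := by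
  refine ⟨?_, ?_⟩
  · have hreach : ∀ o, (t.addLeaf i₀).Reachable o (some i₀)
      | none => addLeaf_adj_none_some.reachable
      | some i => (h.connected.preconnected i i₀).map (addLeafHom t i₀)
    exact Connected.mk fun a b => (hreach a).trans (hreach b).symm
  · refine (h.isAcyclic.map _).sup_edge_of_not_reachable fun hr => ?_
    have hnone := mem_support_of_reachable (Option.some_ne_none i₀).symm hr
    rw [support_map] at hnone
    simp at hnone

lemma Connected.addLeaf_induce_image_some {S : Set ι} (h : (t.induce S).Connected) :
    ((t.addLeaf i₀).induce (some '' S)).Connected :=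
  h.map (G := t.induce S) ⟨fun x => ⟨some x, Set.mem_image_of_mem _ x.2⟩,
    fun hxy => addLeaf_adj_some_some.mpr hxy⟩
    (by rintro ⟨_, i, hi, rfl⟩; exact ⟨⟨i, hi⟩, rfl⟩)

lemma Connected.addLeaf_induce_insert_none {S : Set ι} (h : (t.induce S).Connected)
    (hi₀ : i₀ ∈ S) : ((t.addLeaf i₀).induce (insert none (some '' S))).Connected := by
  rw [Set.insert_eq]
  exact connected_induce_union Preconnected.of_subsingleton
    h.addLeaf_induce_image_some.preconnected rfl ⟨i₀, hi₀, rfl⟩ addLeaf_adj_none_some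

end SimpleGraph

lemma Set.eq_or_eq_of_ncard_le_two {α : Type*} {s : Set α} {a b c : α} (hs : s.ncard ≤ 2)
    (ha : a ∈ s) (hb : b ∈ s) (hc : c ∈ s) (hab : a ≠ b)
    (hfin : s.Finite := by toFinite_tac) : c = a ∨ c = b := by
  by_contra! hne
  have := (Set.two_lt_ncard hfin).mpr ⟨a, ha, b, hb, c, hc, hab, hne.1.symm, hne.2.symm⟩
  omega

namespace TreeDecomp

variable {W : Type} {H : SimpleGraph W}

lemma exists_bag_superset_of_isClique [Finite W] (D : TreeDecomp H) {s : Set W}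
    (hs : H.IsClique s) (hcard : s.ncard ≤ 2) : ∃ i, s ⊆ D.bag i := by
  interval_cases h : s.ncard
  · have : Nonempty D.ι := D.t_tree.connected.nonempty
    exact ⟨Classical.arbitrary _, by simp [(Set.ncard_eq_zero).mp h]⟩
  · obtain ⟨a, rfl⟩ := Set.ncard_eq_one.mp h
    simpa using D.bag_cover a
  · obtain ⟨a, b, hab, rfl⟩ := Set.ncard_eq_two.mp h
    simpa [Set.insert_subset_iff] using D.bag_edge (hs (by simp) (by simp) hab)

end TreeDecomp

section Treewidth

variable {V W : Type} {G : SimpleGraph V} {H : SimpleGraph W} {m : ℕ}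

lemma TreewidthLE.mono {k₁ k₂ : ℕ} (hk : k₁ ≤ k₂) (h : TreewidthLE G k₁) : TreewidthLE G k₂ :=
  let ⟨D, hD⟩ := h
  ⟨D, fun i => (hD i).trans (by omega)⟩

lemma treewidth_eq_succ_iff {k : ℕ} :
    treewidth G = k + 1 ↔ TreewidthLE G (k + 1) ∧ ¬TreewidthLE G k :=
  Nat.sInf_upward_closed_eq_succ_iff (s := {k | TreewidthLE G k}) (fun _ _ => .mono) k

lemma TreewidthLE.of_injective_hom [Finite V] (φ : H →g G) (hφ : Function.Injective φ)
    (h : TreewidthLE G m) : TreewidthLE H m := by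
  obtain ⟨D, hD⟩ := h
  refine ⟨⟨D.ι, D.t, D.t_tree, fun i => φ ⁻¹' D.bag i, fun x => D.bag_cover (φ x),
    fun x y hxy => D.bag_edge (φ.map_adj hxy), fun x => D.bag_conn (φ x)⟩, fun i => ?_⟩
  exact (Set.ncard_le_ncard_of_injOn φ (fun _ hx => hx) hφ.injOn).trans (hD i)

lemma TreewidthLE.of_contraction [Finite V] (f : V → W) (hsurj : Function.Surjective f)
    (hfibre : ∀ a b, f a = f b → a = b ∨ G.Adj a b)
    (hadj : ∀ ⦃x y⦄, H.Adj x y → ∃ a b, f a = x ∧ f b = y ∧ G.Adj a b)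
    (h : TreewidthLE G m) : TreewidthLE H m := by
  obtain ⟨D, hD⟩ := h
  have hcover (x : W) :
      {i | x ∈ f '' D.bag i} = ⋃₀ ((fun a => {i | a ∈ D.bag i}) '' (f ⁻¹' {x})) := by
    ext i; simp [and_comm]
  refine ⟨⟨D.ι, D.t, D.t_tree, fun i => f '' D.bag i, fun x => ?_, fun x y hxy => ?_,
    fun x => ?_⟩, fun i => (Set.ncard_image_le (Set.toFinite _)).trans (hD i)⟩
  · obtain ⟨a, rfl⟩ := hsurj x
    obtain ⟨i, hi⟩ := D.bag_cover a
    exact ⟨i, a, hi, rfl⟩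
  · obtain ⟨a, b, rfl, rfl, hab⟩ := hadj hxy
    obtain ⟨i, ha, hb⟩ := D.bag_edge hab
    exact ⟨i, ⟨a, ha, rfl⟩, ⟨b, hb, rfl⟩⟩
  · rw [hcover]
    obtain ⟨a, rfl⟩ := hsurj x
    refine induce_sUnion_connected_of_pairwise_not_disjoint ⟨_, a, rfl, rfl⟩ ?_ ?_
    · rintro _ _ ⟨b, hb, rfl⟩ ⟨c, hc, rfl⟩
      rcases hfibre b c (hb.trans hc.symm) with rfl | hbc
      · exact (D.bag_cover b).imp fun i hi => ⟨hi, hi⟩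
      · exact D.bag_edge hbc
    · rintro _ ⟨b, -, rfl⟩
      exact D.bag_conn b

end Treewidth

section Attach

variable {V : Type} {G : SimpleGraph V} {m : ℕ}

lemma TreewidthLE.of_attach_vertex {v : V} {H : SimpleGraph {u // u ≠ v}}
    (hGH : ∀ ⦃x y : {u // u ≠ v}⦄, G.Adj x y → H.Adj x y) (D : TreeDecomp H)
    (hD : ∀ i, (D.bag i).ncard ≤ m + 1) (i₀ : D.ι)
    (hi₀ : ∀ u (h : G.Adj v u), (⟨u, h.ne'⟩ : {u // u ≠ v}) ∈ D.bag i₀)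
    (hdeg : (G.neighborSet v).ncard ≤ m) : TreewidthLE G m := by
  let bag : Option D.ι → Set V
    | none => insert v (G.neighborSet v)
    | some i => Subtype.val '' D.bag i
  have hbag_some {u : V} (hu : u ≠ v) (i : D.ι) : u ∈ bag (some i) ↔ ⟨u, hu⟩ ∈ D.bag i :=
    Subtype.val_injective.mem_set_image (a := ⟨u, hu⟩)
  refine ⟨⟨Option D.ι, D.t.addLeaf i₀, D.t_tree.addLeaf i₀, bag, fun u => ?_, fun u w huw => ?_,
    fun u => ?_⟩, ?_⟩
  · by_cases hu : u = v
    · exact ⟨none, by simp [bag, hu]⟩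
    · obtain ⟨i, hi⟩ := D.bag_cover ⟨u, hu⟩
      exact ⟨some i, (hbag_some hu i).mpr hi⟩
  · by_cases hu : u = v
    · subst hu
      exact ⟨none, Set.mem_insert _ _, Set.mem_insert_of_mem _ huw⟩
    by_cases hw : w = v
    · subst hw
      exact ⟨none, Set.mem_insert_of_mem _ huw.symm, Set.mem_insert _ _⟩
    obtain ⟨i, hui, hwi⟩ := D.bag_edge (hGH (x := ⟨u, hu⟩) (y := ⟨w, hw⟩) huw)
    exact ⟨some i, (hbag_some hu i).mpr hui, (hbag_some hw i).mpr hwi⟩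
  · by_cases hu : u = v
    · subst hu
      have : {o | u ∈ bag o} = {none} := by
        ext (_ | i) <;> simp [bag]
      rw [this]
      exact Connected.of_subsingleton
    have hconn := D.bag_conn ⟨u, hu⟩
    by_cases hvu : G.Adj v u
    · have : {o | u ∈ bag o} = insert none (some '' {i | ⟨u, hu⟩ ∈ D.bag i}) := by
        ext (_ | i) <;> simp [bag, hbag_some hu, hvu]
      rw [this]
      exact hconn.addLeaf_induce_insert_none (hi₀ u hvu)
    · have : {o | u ∈ bag o} = some '' {i | ⟨u, hu⟩ ∈ D.bag i} := by
        ext (_ | i) <;> simp [bag, hbag_some hu, hvu, hu]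
      rw [this]
      exact hconn.addLeaf_induce_image_some
  · rintro (_ | i)
    · exact (Set.ncard_insert_le _ _).trans (by omega)
    · exact (Set.ncard_image_of_injective _ Subtype.val_injective).trans_le (hD i)

end Attach

section Contract

variable {V : Type} [Finite V] {G : SimpleGraph V} {v : V} {m : ℕ}

lemma treewidthLE_contractVertex (hdeg : (G.neighborSet v).ncard ≤ 2) (h : TreewidthLE G m) :
    TreewidthLE (contractVertex G v) m := by
  classical
  by_cases hN : ∃ a, G.Adj v a
  · obtain ⟨a, hva⟩ := hN
    let f (u : V) : {u // u ≠ v} := if hu : u = v then ⟨a, hva.ne'⟩ else ⟨u, hu⟩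
    have hf_ne {u : V} (hu : u ≠ v) : f u = ⟨u, hu⟩ := dif_neg hu
    have hf_v : f v = ⟨a, hva.ne'⟩ := dif_pos rfl
    refine h.of_contraction f (fun x => ⟨x, hf_ne x.2⟩) (fun b c hbc => ?_) ?_
    · by_cases hb : b = v <;> by_cases hc : c = v
      · exact .inl (hb.trans hc.symm)
      · subst hb
        rw [hf_v, hf_ne hc, Subtype.mk.injEq] at hbc
        exact .inr (hbc ▸ hva)
      · subst hc
        rw [hf_v, hf_ne hb, Subtype.mk.injEq] at hbc
        exact .inr (hbc ▸ hva.symm)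
      · rw [hf_ne hb, hf_ne hc, Subtype.mk.injEq] at hbc
        exact .inl hbc
    · rintro x y ⟨hxy, hG | ⟨hxv, hyv⟩⟩
      · exact ⟨x, y, hf_ne x.2, hf_ne y.2, hG⟩
      · rcases Set.eq_or_eq_of_ncard_le_two hdeg hxv.symm hyv.symm hva
          (Subtype.val_injective.ne hxy) with hax | hay
        · exact ⟨v, y, hf_v.trans (Subtype.ext hax), hf_ne y.2, hyv.symm⟩
        · exact ⟨x, v, hf_ne x.2, hf_v.trans (Subtype.ext hay), hxv⟩
  · push Not at hN
    refine h.of_injective_hom ⟨Subtype.val, ?_⟩ Subtype.val_injective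
    rintro x y ⟨-, hG | ⟨-, hyv⟩⟩
    exacts [hG, absurd hyv.symm (hN y)]

lemma treewidthLE_of_contractVertex (hdeg : (G.neighborSet v).ncard ≤ 2) (hm : 2 ≤ m)
    (h : TreewidthLE (contractVertex G v) m) : TreewidthLE G m := by
  obtain ⟨D, hD⟩ := h
  let N : Set {u // u ≠ v} := Subtype.val ⁻¹' G.neighborSet v
  have hN_clique : (contractVertex G v).IsClique N := fun x hx y hy hxy =>
    ⟨hxy, .inr ⟨hx.symm, hy.symm⟩⟩
  have hN_card : N.ncard ≤ 2 :=
    (Set.ncard_preimage_of_injective_subset_range Subtype.val_injective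
      fun u (hu : G.Adj v u) => ⟨⟨u, hu.ne'⟩, rfl⟩).trans_le hdeg
  obtain ⟨i₀, hi₀⟩ := D.exists_bag_superset_of_isClique hN_clique hN_card
  have hG_le : ∀ ⦃x y : {u // u ≠ v}⦄, G.Adj x y → (contractVertex G v).Adj x y :=
    fun x y hxy => ⟨fun h => hxy.ne (congrArg _ h), .inl hxy⟩
  exact .of_attach_vertex hG_le D hD i₀ (fun u hu => hi₀ hu) (by omega)

end Contract

/-- If `G` has tree-width `k ≥ 3` and `v` is a vertex of degree at most 2,
then the graph obtained from `G` by contracting `v` to one of its neighbours also has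
tree-width `k`. -/
theorem treewidth_contract_low_degree_vertex {V : Type} [Fintype V]
    (G : SimpleGraph V) (v : V) (hdeg : (G.neighborSet v).ncard ≤ 2)
    (k : ℕ) (hk : 3 ≤ k) (htw : treewidth G = k) :
    treewidth (contractVertex G v) = k := by
  have hiff {m : ℕ} (hm : 2 ≤ m) : TreewidthLE (contractVertex G v) m ↔ TreewidthLE G m :=
    ⟨treewidthLE_of_contractVertex hdeg hm, treewidthLE_contractVertex hdeg⟩
  obtain ⟨j, rfl⟩ : ∃ j, k = j + 1 := ⟨k - 1, by omega⟩
  rw [treewidth_eq_succ_iff] at htw ⊢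
  rwa [hiff (by omega), hiff (by omega)]
end

section
/- For every integer n ≥ 3, the set of n points equally spaced on the unit circle admits a spanning tree (in fact a Hamiltonian path visiting the points in a sawtooth pattern) whose dilation is at most 1/sin(π/(2n)) ≤ 2n/π + π/(2n). -/
open Real SimpleGraph

/-- The `i`-th of the points equally spaced on the unit circle in the Euclidean
plane, `p_i = (sin(2πi/n), cos(2πi/n))`. -/
noncomputable def circlePt (n : ℕ) (i : ℕ) : EuclideanSpace ℝ (Fin 2) :=
  (WithLp.equiv 2 (Fin 2 → ℝ)).symm
    ![sin (2 * π * i / n), cos (2 * π * i / n)]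

/-- The Euclidean length of a walk in a geometric graph whose vertices are the points
`p_i`. -/
noncomputable def walkLength {n : ℕ} {T : SimpleGraph (Fin n)} {u v : Fin n}
    (w : T.Walk u v) : ℝ :=
  (w.darts.map fun d => dist (circlePt n d.fst) (circlePt n d.snd)).sum

/-!
Rotated by half a step, the `m`-th vertex of the sawtooth path sits at angle `±θ_m` with
`θ_m = (m + 1/2)π/n`, so its height `cos θ_m` decreases along the path. The edge from
position `m` to `m + 1` has length `2 sin((m + 1)π/n)`, and by the sum-to-product formula
its drop in height is exactly `sin(π/(2n))` times that length. The height difference of two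
points on the circle is at most their distance, so the subpath between any two vertices has
length at most `1/sin(π/(2n))` times their distance. The numerical bound follows from
`sin x > x - x³/6`.
-/

noncomputable def unitCirclePt (θ : ℝ) : EuclideanSpace ℝ (Fin 2) :=
  (WithLp.equiv 2 (Fin 2 → ℝ)).symm ![sin θ, cos θ]

lemma circlePt_eq_unitCirclePt (n i : ℕ) : circlePt n i = unitCirclePt (2 * π * i / n) := rfl

lemma unitCirclePt_add_two_pi (θ : ℝ) : unitCirclePt (θ + 2 * π) = unitCirclePt θ := by
  simp only [unitCirclePt, sin_add_two_pi, cos_add_two_pi]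

lemma dist_unitCirclePt (α β : ℝ) :
    dist (unitCirclePt α) (unitCirclePt β) = 2 * |sin ((α - β) / 2)| := by
  have hsq : (sin α - sin β) ^ 2 + (cos α - cos β) ^ 2 = (2 * |sin ((α - β) / 2)|) ^ 2 := by
    rw [mul_pow, sq_abs, sin_sq_eq_half_sub, show 2 * ((α - β) / 2) = α - β by ring, cos_sub]
    nlinarith [sin_sq_add_cos_sq α, sin_sq_add_cos_sq β]
  rw [EuclideanSpace.dist_eq, Fin.sum_univ_two]
  simp only [unitCirclePt, WithLp.equiv_symm_apply, PiLp.toLp_apply, Matrix.cons_val_zero,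
    Matrix.cons_val_one, Real.dist_eq, sq_abs]
  rw [hsq, sqrt_sq (by positivity)]

lemma abs_cos_sub_cos_le_two_mul_abs_sin (α β : ℝ) :
    |cos α - cos β| ≤ 2 * |sin ((α - β) / 2)| := by
  rw [cos_sub_cos, abs_mul, abs_mul, abs_neg, abs_two]
  have := abs_sin_le_one ((α + β) / 2)
  have := abs_nonneg (sin ((α - β) / 2))
  nlinarith

lemma one_div_sin_le_one_div_add_self {x : ℝ} (hx : 0 < x) (hx5 : x ^ 2 ≤ 5) :
    1 / sin x ≤ 1 / x + x := by
  have hsin := sin_gt_sub_cube hx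
  have hsin_pos : 0 < sin x := by nlinarith
  rw [div_add' _ _ _ hx.ne', div_le_div_iff₀ hsin_pos hx]
  nlinarith [pow_pos hx 3]

lemma cos_neg_one_pow_mul (k : ℕ) (x : ℝ) : cos ((-1) ^ k * x) = cos x := by
  rcases neg_one_pow_eq_or ℝ k with h | h <;> simp [h]

lemma abs_sin_neg_one_pow_mul (k : ℕ) (x : ℝ) : |sin ((-1) ^ k * x)| = |sin x| := by
  rcases neg_one_pow_eq_or ℝ k with h | h <;> simp [h]

lemma isAcyclic_pathGraph (n : ℕ) : (pathGraph n).IsAcyclic := by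
  refine isAcyclic_iff_forall_adj_isBridge.mpr fun u v huv => ?_
  wlog h : (u : ℕ) + 1 = v generalizing u v
  · rw [Sym2.eq_swap]
    exact this v u huv.symm ((pathGraph_adj.mp huv).resolve_left h)
  rintro ⟨p⟩
  obtain ⟨d, -, hfst, hsnd⟩ :=
    p.exists_boundary_dart (Set.Iic u) Set.self_mem_Iic
      (show v ∉ Set.Iic u by rw [Set.mem_Iic, not_le, Fin.lt_def]; omega)
  obtain ⟨hadj, hne⟩ := d.adj
  simp only [Set.mem_Iic, not_le, Fin.le_def] at hfst hsnd
  rw [pathGraph_adj] at hadj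
  rw [show d.fst = u by ext; omega, show d.snd = v by ext; omega] at hne
  exact hne (by simp [fromEdgeSet_adj, Fin.ext_iff]; omega)

lemma isTree_pathGraph {n : ℕ} (hn : 0 < n) : (pathGraph n).IsTree :=
  ⟨(connected_iff _).mpr ⟨pathGraph_preconnected n, ⟨⟨0, hn⟩⟩⟩, isAcyclic_pathGraph n⟩

lemma exists_walk_pathGraph_sum_darts_eq_sub {n : ℕ} {M : Type*} [AddCommGroup M]
    (f : Fin n → Fin n → M) (g : Fin n → M)
    (hfg : ∀ x y : Fin n, (x : ℕ) + 1 = y → f x y = g x - g y) {a b : Fin n} (hab : a ≤ b) :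
    ∃ w : (pathGraph n).Walk a b, (w.darts.map fun d => f d.fst d.snd).sum = g a - g b := by
  obtain ⟨b, hb⟩ := b
  induction b with
  | zero =>
    obtain rfl : a = ⟨0, hb⟩ := Fin.ext (Nat.le_zero.mp hab)
    exact ⟨Walk.nil, by simp⟩
  | succ k ih =>
    rcases hab.eq_or_lt with rfl | hlt
    · exact ⟨Walk.nil, by simp⟩
    obtain ⟨w, hw⟩ := ih (by omega) (Fin.le_def.mpr (Nat.lt_succ_iff.mp hlt))
    have hadj : (pathGraph n).Adj ⟨k, by omega⟩ ⟨k + 1, hb⟩ := pathGraph_adj.mpr (Or.inl rfl)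
    refine ⟨w.concat hadj, ?_⟩
    simp only [Walk.darts_concat, List.concat_eq_append, List.map_append, List.sum_append, hw,
      List.map_cons, List.map_nil, List.sum_cons, List.sum_nil, add_zero,
      hfg ⟨k, _⟩ ⟨k + 1, hb⟩ rfl]
    abel

lemma walkLength_map {V : Type*} {G : SimpleGraph V} {n : ℕ} {T : SimpleGraph (Fin n)}
    (φ : G →g T) {a b : V} (w : G.Walk a b) :
    walkLength (w.map φ) =
      (w.darts.map fun d => dist (circlePt n (φ d.fst)) (circlePt n (φ d.snd))).sum := by
  simp only [walkLength, Walk.darts_map, List.map_map]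
  rfl

lemma walkLength_copy {n : ℕ} {T : SimpleGraph (Fin n)} {u v u' v' : Fin n}
    (w : T.Walk u v) (hu : u = u') (hv : v = v') : walkLength (w.copy hu hv) = walkLength w := by
  subst hu hv
  rfl

lemma walkLength_reverse {n : ℕ} {T : SimpleGraph (Fin n)} {u v : Fin n} (w : T.Walk u v) :
    walkLength w.reverse = walkLength w := by
  simp only [walkLength, Walk.darts_reverse, List.map_reverse, List.sum_reverse, List.map_map]
  exact congrArg List.sum (List.map_congr_left fun _ _ => dist_comm _ _)

noncomputable def sawtooth (n : ℕ) : Fin n ≃ Fin n :=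
  Equiv.ofBijective
    (fun m : Fin n => ⟨if m.val % 2 = 0 then m.val / 2 else n - 1 - m.val / 2, by split <;> omega⟩)
    (Finite.injective_iff_bijective.mp fun a b h => by
      simp only [Fin.mk.injEq] at h
      ext
      split at h <;> split at h <;> omega)

lemma sawtooth_apply_val (n : ℕ) (m : Fin n) :
    (sawtooth n m : ℕ) = if m.val % 2 = 0 then m.val / 2 else n - 1 - m.val / 2 := rfl

noncomputable def sawtoothAngle (n m : ℕ) : ℝ := (m + 1 / 2) * (π / n)

lemma circlePt_sawtooth {n : ℕ} (m : Fin n) :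
    circlePt n (sawtooth n m) =
      unitCirclePt ((-1) ^ (m : ℕ) * sawtoothAngle n m - π / (2 * n)) := by
  have hn : (n : ℝ) ≠ 0 := by have := m.pos; positivity
  rw [circlePt_eq_unitCirclePt, sawtooth_apply_val, sawtoothAngle]
  obtain ⟨j, hj | hj⟩ := Nat.even_or_odd' (m : ℕ)
  · rw [hj, if_pos (by omega), show 2 * j / 2 = j by omega, pow_mul, neg_one_sq, one_pow]
    congr 1
    field_simp
    push_cast
    ring
  · rw [hj, if_neg (by omega), show (2 * j + 1) / 2 = j by omega, pow_succ, pow_mul, neg_one_sq,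
      one_pow]
    conv_rhs => rw [← unitCirclePt_add_two_pi]
    congr 1
    rw [Nat.cast_sub (by omega), Nat.cast_sub (by omega)]
    field_simp
    push_cast
    ring

lemma cos_sawtoothAngle_sub_le_dist {n : ℕ} (a b : Fin n) :
    cos (sawtoothAngle n a) - cos (sawtoothAngle n b) ≤
      dist (circlePt n (sawtooth n a)) (circlePt n (sawtooth n b)) := by
  rw [circlePt_sawtooth, circlePt_sawtooth, dist_unitCirclePt,
    ← cos_neg_one_pow_mul a (sawtoothAngle n a), ← cos_neg_one_pow_mul b (sawtoothAngle n b)]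
  refine (le_abs_self _).trans ((abs_cos_sub_cos_le_two_mul_abs_sin _ _).trans_eq ?_)
  ring_nf

lemma dist_circlePt_sawtooth_mul_sin {n : ℕ} {m m' : Fin n} (h : (m : ℕ) + 1 = m') :
    dist (circlePt n (sawtooth n m)) (circlePt n (sawtooth n m')) * sin (π / (2 * n)) =
      cos (sawtoothAngle n m) - cos (sawtoothAngle n m') := by
  have hn : (0 : ℝ) < n := by have := m.pos; positivity
  have hm' : (m' : ℝ) = m + 1 := by exact_mod_cast h.symm
  have hsin : 0 ≤ sin (m' * (π / n)) := by
    refine sin_nonneg_of_nonneg_of_le_pi (by positivity) ?_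
    calc (m' : ℝ) * (π / n) ≤ n * (π / n) := by gcongr; exact_mod_cast m'.is_lt.le
      _ = π := by field_simp
  have half_chord : ((-1) ^ (m : ℕ) * sawtoothAngle n m - π / (2 * n) -
      ((-1) ^ (m : ℕ) * (-1) * sawtoothAngle n m' - π / (2 * n))) / 2 =
      (-1) ^ (m : ℕ) * (m' * (π / n)) := by
    rw [sawtoothAngle, sawtoothAngle, hm']; ring
  have half_sum : (sawtoothAngle n m + sawtoothAngle n m') / 2 = m' * (π / n) := by
    rw [sawtoothAngle, sawtoothAngle, hm']; ring
  have half_diff : (sawtoothAngle n m - sawtoothAngle n m') / 2 = -(π / (2 * n)) := by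
    rw [sawtoothAngle, sawtoothAngle, hm']; field_simp; ring
  rw [circlePt_sawtooth, circlePt_sawtooth, dist_unitCirclePt, ← h, pow_succ, h, half_chord,
    abs_sin_neg_one_pow_mul, abs_of_nonneg hsin, cos_sub_cos, half_sum, half_diff, sin_neg]
  ring

noncomputable def sawtoothGraph (n : ℕ) : SimpleGraph (Fin n) :=
  (pathGraph n).map (sawtooth n)

noncomputable def sawtoothGraphIso (n : ℕ) : pathGraph n ≃g sawtoothGraph n :=
  Iso.map (sawtooth n) (pathGraph n)

lemma isTree_sawtoothGraph {n : ℕ} (hn : 0 < n) : (sawtoothGraph n).IsTree :=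
  (sawtoothGraphIso n).isTree_iff.mp (isTree_pathGraph hn)

lemma exists_sawtoothGraph_walk_mul_sin_eq {n : ℕ} {a b : Fin n} (hab : a ≤ b) :
    ∃ w : (sawtoothGraph n).Walk (sawtooth n a) (sawtooth n b),
      walkLength w * sin (π / (2 * n)) = cos (sawtoothAngle n a) - cos (sawtoothAngle n b) := by
  obtain ⟨w, hw⟩ := exists_walk_pathGraph_sum_darts_eq_sub
    (fun x y => dist (circlePt n (sawtooth n x)) (circlePt n (sawtooth n y)) * sin (π / (2 * n)))
    (fun m => cos (sawtoothAngle n m)) (fun _ _ h => dist_circlePt_sawtooth_mul_sin h) hab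
  refine ⟨w.map (sawtoothGraphIso n).toHom, ?_⟩
  rw [← hw, List.sum_map_mul_right]
  exact congrArg (· * _) (walkLength_map _ w)

lemma exists_sawtoothGraph_walk_le {n : ℕ} {a b : Fin n} (hab : a ≤ b) :
    ∃ w : (sawtoothGraph n).Walk (sawtooth n a) (sawtooth n b), walkLength w ≤
      1 / sin (π / (2 * n)) * dist (circlePt n (sawtooth n a)) (circlePt n (sawtooth n b)) := by
  have hsin : 0 < sin (π / (2 * n)) := by
    have : (1 : ℝ) ≤ n := by exact_mod_cast a.pos
    exact sin_pos_of_pos_of_lt_pi (by positivity) (div_lt_self pi_pos (by linarith))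
  obtain ⟨w, hw⟩ := exists_sawtoothGraph_walk_mul_sin_eq hab
  refine ⟨w, ?_⟩
  rw [one_div_mul_eq_div, le_div_iff₀ hsin, hw]
  exact cos_sawtoothAngle_sub_le_dist a b

/-- For every `n ≥ 3`, the `n` points equally spaced on the unit circle
admit a geometric spanning tree whose dilation is at most
`1/sin(π/(2n)) ≤ 2n/π + π/(2n)`. -/
theorem circle_points_tree_spanner (n : ℕ) (hn : 3 ≤ n) :
    (∃ T : SimpleGraph (Fin n), T.IsTree ∧
      ∀ u v : Fin n, u ≠ v → ∃ w : T.Walk u v,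
        walkLength w ≤ (1 / sin (π / (2 * n))) * dist (circlePt n u) (circlePt n v)) ∧
    1 / sin (π / (2 * n)) ≤ 2 * n / π + π / (2 * n) := by
  refine ⟨⟨sawtoothGraph n, isTree_sawtoothGraph (by omega), fun u v _ => ?_⟩, ?_⟩
  · rcases le_total ((sawtooth n).symm u) ((sawtooth n).symm v) with h | h
    · obtain ⟨w, hw⟩ := exists_sawtoothGraph_walk_le h
      refine ⟨w.copy (by simp) (by simp), ?_⟩
      simpa [walkLength_copy] using hw
    · obtain ⟨w, hw⟩ := exists_sawtoothGraph_walk_le h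
      refine ⟨(w.copy (by simp) (by simp)).reverse, ?_⟩
      simpa [walkLength_copy, walkLength_reverse, dist_comm (circlePt n u)] using hw
  · have hx0 : 0 < π / (2 * n) := by positivity
    have hx1 : π / (2 * n) ≤ 1 := by
      have : (3 : ℝ) ≤ n := by exact_mod_cast hn
      rw [div_le_one (by positivity)]
      linarith [pi_lt_four]
    calc 1 / sin (π / (2 * n)) ≤ 1 / (π / (2 * n)) + π / (2 * n) :=
          one_div_sin_le_one_div_add_self hx0 (by nlinarith)
      _ = 2 * n / π + π / (2 * n) := by rw [one_div_div]
end
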